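/- arXiv:2306.00692 — 2 statements merged into one kernel-verified Lean document; each statement's English description precedes it below -/
import Mathlib

section
/- Fix real numbers ρ_m, ρ_c > 0, X_m, X_c, and p_m, p_c > 0, γ_m, γ_c > 0. Let B be the block-diagonal 4×4 real matrix with blocks [[−(γ_m+1)p_m, 1], [−(X_m²/ρ_m² + γ_m p_m X_m/ρ_m), 2X_m/ρ_m − p_m]] and [[−(γ_c+1)p_c, 1], [−(X_c²/ρ_c² + γ_c p_c X_c/ρ_c), 2X_c/ρ_c − p_c]]. With v_m = X_m/ρ_m − p_m and v_c = X_c/ρ_c − p_c, the characteristic polynomial of B factors as χ_B(λ) = (λ − v_m)(λ − (v_m − γ_m p_m))(λ − v_c)(λ − (v_c − γ_c p_c)); in particular all eigenvalues of B are real, namely v_m, v_m − γ_m p_m, v_c, v_c − γ_c p_c. -/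
set_option maxHeartbeats 2000000

open Polynomial in
/-- The characteristic polynomial of the block-diagonal flux Jacobian of the
two-class extended Aw–Rascle model factors into four real linear factors, so
all eigenvalues are real: `v_m`, `v_m − γ_m p_m`, `v_c`, `v_c − γ_c p_c`. -/
theorem charpoly_flux_jacobian_factors
    (ρ_m ρ_c X_m X_c p_m p_c γ_m γ_c v_m v_c : ℝ)
    (hρm : 0 < ρ_m) (hρc : 0 < ρ_c)
    (hpm : 0 < p_m) (hpc : 0 < p_c) (hγm : 0 < γ_m) (hγc : 0 < γ_c)
    (hvm : v_m = X_m / ρ_m - p_m) (hvc : v_c = X_c / ρ_c - p_c)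
    (B : Matrix (Fin 4) (Fin 4) ℝ)
    (hB : B = !![-(γ_m + 1) * p_m, 1, 0, 0;
                 -(X_m ^ 2 / ρ_m ^ 2 + γ_m * p_m * X_m / ρ_m), 2 * X_m / ρ_m - p_m, 0, 0;
                 0, 0, -(γ_c + 1) * p_c, 1;
                 0, 0, -(X_c ^ 2 / ρ_c ^ 2 + γ_c * p_c * X_c / ρ_c), 2 * X_c / ρ_c - p_c]) :
    B.charpoly =
      (X - C v_m) * (X - C (v_m - γ_m * p_m)) * (X - C v_c) * (X - C (v_c - γ_c * p_c)) := by
  have hcm : B.charmatrix =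
      !![X - C (-(γ_m + 1) * p_m), - C 1, 0, 0;
         - C (-(X_m ^ 2 / ρ_m ^ 2 + γ_m * p_m * X_m / ρ_m)), X - C (2 * X_m / ρ_m - p_m), 0, 0;
         0, 0, X - C (-(γ_c + 1) * p_c), - C 1;
         0, 0, - C (-(X_c ^ 2 / ρ_c ^ 2 + γ_c * p_c * X_c / ρ_c)), X - C (2 * X_c / ρ_c - p_c)] := by
    subst hB
    ext i j
    fin_cases i <;> fin_cases j <;>
      simp [Matrix.charmatrix_apply, Matrix.one_apply, Matrix.vecHead, Matrix.vecTail]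
  have hm : X_m / ρ_m = v_m + p_m := by rw [hvm]; ring
  have hc : X_c / ρ_c = v_c + p_c := by rw [hvc]; ring
  have h2m : X_m ^ 2 / ρ_m ^ 2 = (v_m + p_m) ^ 2 := by rw [← div_pow, hm]
  have h2c : X_c ^ 2 / ρ_c ^ 2 = (v_c + p_c) ^ 2 := by rw [← div_pow, hc]
  have h3m : γ_m * p_m * X_m / ρ_m = γ_m * p_m * (v_m + p_m) := by rw [mul_div_assoc, hm]
  have h3c : γ_c * p_c * X_c / ρ_c = γ_c * p_c * (v_c + p_c) := by rw [mul_div_assoc, hc]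
  have h4m : 2 * X_m / ρ_m = 2 * (v_m + p_m) := by rw [mul_div_assoc, hm]
  have h4c : 2 * X_c / ρ_c = 2 * (v_c + p_c) := by rw [mul_div_assoc, hc]
  rw [Matrix.charpoly, hcm]
  rw [h2m, h2c, h3m, h3c, h4m, h4c]
  simp [Matrix.det_succ_row_zero, Fin.sum_univ_succ, map_add, map_mul, map_sub, map_neg, map_pow,
    map_ofNat, Fin.succAbove]
  ring
end

section
/- Fix ψ > 0, γ > 0, and ᾱ ≠ 0, β̄ ∈ ℝ. Let B̄ = [[2ᾱ, 0], [β̄, ᾱ]], C̄ = [[β̄ − 2(γ+1)ψ^γ ᾱ^{1+2γ}, ᾱ], [−(1+2γ)ψ^γ β̄ ᾱ^{2γ}, 2β̄ − ψ^γ ᾱ^{1+2γ}]], and Ā = [[−(1+γ)ψ^γ ᾱ^{2γ}, 1], [−(γψ^γ ᾱ^{2γ}·β̄/ᾱ + β̄²/ᾱ²), 2β̄/ᾱ − ψ^γ ᾱ^{2γ}]]. Then Ā·B̄ = C̄; moreover B̄ is invertible and Ā = C̄·B̄⁻¹. -/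
/-- The Roe matrix relation `Ā B̄ = C̄`: with `B̄ = dU/dZ` and `C̄ = df/dZ`
evaluated at the averaged state `(ᾱ, β̄)`, the matrix `B̄` is invertible and
the Roe matrix `Ā` equals `C̄ B̄⁻¹`. -/
theorem roe_matrix_eq_C_mul_B_inv
    (ψ γ αbar βbar : ℝ) (hψ : 0 < ψ) (hγ : 0 < γ) (hα : αbar ≠ 0)
    (B C A : Matrix (Fin 2) (Fin 2) ℝ)
    (hB : B = !![2 * αbar, 0;
                 βbar, αbar])
    (hC : C = !![βbar - 2 * (γ + 1) * ψ ^ γ * αbar ^ (1 + 2 * γ), αbar;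
                 -(1 + 2 * γ) * ψ ^ γ * βbar * αbar ^ (2 * γ),
                   2 * βbar - ψ ^ γ * αbar ^ (1 + 2 * γ)])
    (hA : A = !![-(1 + γ) * ψ ^ γ * αbar ^ (2 * γ), 1;
                 -(γ * ψ ^ γ * αbar ^ (2 * γ) * (βbar / αbar) + βbar ^ 2 / αbar ^ 2),
                   2 * (βbar / αbar) - ψ ^ γ * αbar ^ (2 * γ)]) :
    A * B = C ∧ IsUnit B.det ∧ A = C * B⁻¹ := by
  have key : αbar ^ (1 + 2 * γ) = αbar ^ (2 * γ) * αbar := by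
    rw [add_comm]; exact Real.rpow_add_one hα _
  have hAB : A * B = C := by
    subst hA hB hC
    ext i j
    fin_cases i <;> fin_cases j <;>
      · simp only [Matrix.mul_apply, Fin.sum_univ_two, key, Matrix.cons_val', Matrix.cons_val_zero,
          Matrix.cons_val_one, Matrix.head_cons, Matrix.empty_val', Matrix.cons_val_fin_one,
          Matrix.head_fin_const, Matrix.of_apply, Matrix.head_fin_const, Fin.zero_eta, Fin.mk_one]
        field_simp
        try ring
  have hdet : IsUnit B.det := by
    have : B.det = 2 * αbar * αbar := by rw [hB]; simp [Matrix.det_fin_two_of]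
    rw [this]
    exact isUnit_iff_ne_zero.2 (by positivity)
  refine ⟨hAB, hdet, ?_⟩
  calc A = A * (B * B⁻¹) := by rw [Matrix.mul_nonsing_inv B hdet, Matrix.mul_one]
    _ = (A * B) * B⁻¹ := by rw [Matrix.mul_assoc]
    _ = C * B⁻¹ := by rw [hAB]
end
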